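/- Let [t₁, …, tᵢ] be a valid token sequence with i ≥ 1 and let tᵢ₊₁ ∈ V. If the pair [tᵢ, tᵢ₊₁] is valid, then the sequence [t₁, …, tᵢ, tᵢ₊₁] is valid. -/

import Mathlib

/-!
Formalization of a BPE tokenizer with an ordered merge list.

* `σ` is the (finite) byte alphabet, `τ` is the (finite) vocabulary of tokens.
* `base` embeds each byte as a distinct base token.
* `dec` decodes a single token to a byte string; it is extended to token
  sequences by concatenation (`decodeSeq`).
* `merges` is the ordered merge list; each merge `(l, r, n)` replaces an
  adjacent pair `(l, r)` by the single token `n`, and satisfies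
  `dec n = dec l ++ dec r`.
* `encode` turns a byte string into its base tokens and then, processing the
  merges in order, repeatedly replaces the leftmost adjacent occurrence of
  `(l, r)` by `n` until no occurrence remains, before moving to the next merge.
-/

structure BPE (σ τ : Type*) where
  base : σ → τ
  dec : τ → List σ
  merges : List (τ × τ × τ)
  base_inj : Function.Injective base
  dec_base : ∀ b, dec (base b) = [b]
  dec_merge : ∀ m ∈ merges, dec m.2.2 = dec m.1 ++ dec m.2.1

namespace BPE

variable {σ τ : Type*} [DecidableEq τ]

/-- Decode a token sequence by concatenating the decodings of its tokens. -/
def decodeSeq (B : BPE σ τ) (T : List τ) : List σ := (T.map B.dec).flatten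

/-- Replace the leftmost adjacent occurrence of `(l, r)` by `n`, if any,
also returning the starting byte position of the replaced pair. -/
def replaceLeftmost (B : BPE σ τ) (l r n : τ) : List τ → Option (ℕ × List τ)
  | [] => none
  | [_] => none
  | t :: u :: rest =>
      if t = l ∧ u = r then some (0, n :: rest)
      else (B.replaceLeftmost l r n (u :: rest)).map
        (fun p => (p.1 + (B.dec t).length, t :: p.2))

/-- Repeatedly replace the leftmost adjacent occurrence of `(l, r)` by `n`
until no occurrence remains (the fuel, taken to be the length of the list,
suffices since every replacement shortens the list).  Also returns the list
of byte positions at which replacements were performed, in order. -/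
def runMerge (B : BPE σ τ) (l r n : τ) : ℕ → List τ → List τ × List ℕ
  | 0, T => (T, [])
  | fuel + 1, T =>
    match B.replaceLeftmost l r n T with
    | none => (T, [])
    | some (p, T') =>
      let q := B.runMerge l r n fuel T'
      (q.1, p :: q.2)

/-- Process an (indexed) list of merges in order, starting from token sequence
`T`; returns the final token sequence together with the ordered list of merge
applications performed, each recorded as a pair
(index of the merge in the merge list, starting byte position). -/
def encodeRunAux (B : BPE σ τ) : List (ℕ × τ × τ × τ) → List τ → List τ × List (ℕ × ℕ)
  | [], T => (T, [])
  | (i, l, r, n) :: ms, T =>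
    let q := B.runMerge l r n T.length T
    let q' := B.encodeRunAux ms q.1
    (q'.1, q.2.map (fun p => (i, p)) ++ q'.2)

/-- The full run of the BPE encoder on a byte string `S`: the final token
sequence together with the ordered list of merge applications performed. -/
def encodeRun (B : BPE σ τ) (S : List σ) : List τ × List (ℕ × ℕ) :=
  B.encodeRunAux (B.merges.zipIdx.map Prod.swap) (S.map B.base)

/-- BPE encoding of a byte string. -/
def encode (B : BPE σ τ) (S : List σ) : List τ := (B.encodeRun S).1

/-- The ordered list of merge applications (merge index, starting byte
position) performed during the run of `encode` on `S`. -/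
def encodeApps (B : BPE σ τ) (S : List σ) : List (ℕ × ℕ) := (B.encodeRun S).2

/-- A token sequence is *valid* if it is the canonical encoding of the byte
string it decodes to. -/
def Valid (B : BPE σ τ) (T : List τ) : Prop := B.encode (B.decodeSeq T) = T

/-- The merge list is in *normal form*:
(i) each token is produced by at most one merge;
(ii) every token `t` satisfies `encode (dec t) = [t]`;
(iii) every merge occurs later in the merge list than the merges producing
each of its two input tokens. -/
def NormalForm (B : BPE σ τ) : Prop :=
  (∀ i j (hi : i < B.merges.length) (hj : j < B.merges.length),
      (B.merges[i]'hi).2.2 = (B.merges[j]'hj).2.2 → i = j) ∧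
  (∀ t : τ, B.encode (B.dec t) = [t]) ∧
  (∀ i j (hi : i < B.merges.length) (hj : j < B.merges.length),
      (B.merges[i]'hi).2.2 = (B.merges[j]'hj).1 ∨
        (B.merges[i]'hi).2.2 = (B.merges[j]'hj).2.1 → i < j)

/-- The merge application `app = (t, p)` *crosses* byte position `c` if the
token it creates (the output of merge `t`, starting at byte position `p`)
has a byte span properly containing `c`. -/
def AppCrosses (B : BPE σ τ) (app : ℕ × ℕ) (c : ℕ) : Prop :=
  ∃ h : app.1 < B.merges.length,
    app.2 < c ∧ c < app.2 + (B.dec (B.merges[app.1]'h).2.2).length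

/-- Some merge applied during the run of `encode` on `S` crosses position `c`. -/
def MergeCrossesInRun (B : BPE σ τ) (S : List σ) (c : ℕ) : Prop :=
  ∃ app ∈ B.encodeApps S, B.AppCrosses app c

/-- The token sequence `U` contains a token whose byte span properly
contains position `c`. -/
def TokenCrosses (B : BPE σ τ) (U : List τ) (c : ℕ) : Prop :=
  ∃ k, k < U.length ∧
    (B.decodeSeq (U.take k)).length < c ∧ c < (B.decodeSeq (U.take (k + 1))).length

end BPE
namespace BPE

variable {σ τ : Type*} [DecidableEq τ]

/-- The *Valid Covering Tree* of a byte string `P`: the set of all nonempty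
token sequences `T = [t₁, …, tₙ]` such that (1) `P` is a prefix of
`decode T`, (2) `decode [t₁, …, t_{n-1}]` is a prefix of `P`, and
(3) `T` is valid. -/
def VCT (B : BPE σ τ) (P : List σ) : Set (List τ) :=
  {T | T ≠ [] ∧ P <+: B.decodeSeq T ∧ B.decodeSeq T.dropLast <+: P ∧ B.Valid T}

/-- The maximal prefix of a token sequence whose total decoded length is at
most `k`, i.e. the tokens whose byte spans end at or before position `k`
(together with their spans, which are determined by the preceding tokens). -/
def spanPrefix (B : BPE σ τ) (k : ℕ) : List τ → List τ
  | [] => []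
  | t :: T =>
      if (B.dec t).length ≤ k then t :: B.spanPrefix (k - (B.dec t).length) T
      else []

/-- `L₀` is a *lookahead bound* for the tokenizer if whenever two byte strings
agree on their first `k + L₀` bytes, the tokens of their encodings whose byte
spans end at or before position `k` coincide (with identical spans). -/
def LookaheadBound (B : BPE σ τ) (L₀ : ℕ) : Prop :=
  ∀ (x x' : List σ) (k : ℕ), x.take (k + L₀) = x'.take (k + L₀) →
    B.spanPrefix k (B.encode x) = B.spanPrefix k (B.encode x')

/-- `U'` is the minimal covering prefix of `U` with respect to `P`: the
shortest prefix of `U` whose decoding has `P` as a prefix. -/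
def IsMinCover (B : BPE σ τ) (P : List σ) (U U' : List τ) : Prop :=
  U' <+: U ∧ P <+: B.decodeSeq U' ∧
    ∀ U'' : List τ, U'' <+: U → P <+: B.decodeSeq U'' → U'.length ≤ U''.length

/-- The pair `(l, r)` occurs adjacently in `T`. -/
def PairAdj (l r : τ) (T : List τ) : Prop := ∃ A C, T = A ++ l :: r :: C

/-- The merge application `a = (t, i)` (merge index `t`, starting byte
position `i` of the left token) is applicable to the token sequence `T`. -/
def Applicable (B : BPE σ τ) (a : ℕ × ℕ) (T : List τ) : Prop :=
  ∃ h : a.1 < B.merges.length, ∃ A C : List τ,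
    T = A ++ (B.merges[a.1]'h).1 :: (B.merges[a.1]'h).2.1 :: C ∧
      (B.decodeSeq A).length = a.2

/-- `T'` is obtained from `T` by performing the merge application `a = (t, i)`:
the input pair of merge `t`, occurring adjacently in `T` with the left token
starting at byte position `i`, is replaced by the output token of merge `t`. -/
def ApplyApp (B : BPE σ τ) (a : ℕ × ℕ) (T T' : List τ) : Prop :=
  ∃ h : a.1 < B.merges.length, ∃ A C : List τ,
    T = A ++ (B.merges[a.1]'h).1 :: (B.merges[a.1]'h).2.1 :: C ∧
      (B.decodeSeq A).length = a.2 ∧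
      T' = A ++ (B.merges[a.1]'h).2.2 :: C

/-- Lexicographic order on merge applications `(t, i)`. -/
def appLE (a a' : ℕ × ℕ) : Prop :=
  a.1 < a'.1 ∨ (a.1 = a'.1 ∧ a.2 ≤ a'.2)

/-- `GreedyChain B T₀ apps T` holds when the sequence of merge applications
`apps` leads from token sequence `T₀` to token sequence `T`, and each applied
application is lexicographically least among those applicable to the current
token sequence. -/
inductive GreedyChain (B : BPE σ τ) : List τ → List (ℕ × ℕ) → List τ → Prop
  | nil (T : List τ) : GreedyChain B T [] T
  | cons {T T' Tf : List τ} {a : ℕ × ℕ} {apps : List (ℕ × ℕ)} :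
      B.ApplyApp a T T' →
      (∀ a', B.Applicable a' T → appLE a a') →
      GreedyChain B T' apps Tf →
      GreedyChain B T (a :: apps) Tf

end BPE

/-!
A merge only fuses adjacent tokens, so a byte position that is a token boundary of the final
encoding was one at every stage of the run; and a run that never fuses across a position
encodes the two sides separately. Writing `T = P ++ [tᵢ]`, validity of `T` and of `[tᵢ, t]`
(with `encode (dec tᵢ) = [tᵢ]` from the normal form) thus say that the encoding splits both at
`dec P | dec tᵢ` and at `dec tᵢ | dec t`. Merge by merge, the run on `dec P ++ dec tᵢ ++ dec t`
then splits as well: once the current merge is exhausted on the left part, the run on the rest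
can interact with it only at the junction with its last token, which is the last token of the
middle part, so the run on `dec tᵢ ++ dec t` alone shows that no such junction occurs.
-/

namespace BPE

variable {σ τ : Type*}

section Cuts

variable (B : BPE σ τ) {l r n : τ}

@[simp]
theorem decodeSeq_nil : B.decodeSeq [] = [] := rfl

@[simp]
theorem decodeSeq_cons (t : τ) (T : List τ) :
    B.decodeSeq (t :: T) = B.dec t ++ B.decodeSeq T := by
  simp [decodeSeq]

@[simp]
theorem decodeSeq_append (T U : List τ) :
    B.decodeSeq (T ++ U) = B.decodeSeq T ++ B.decodeSeq U := by
  simp [decodeSeq]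

theorem decodeSeq_map_base (S : List σ) : B.decodeSeq (S.map B.base) = S := by
  induction S <;> simp_all [B.dec_base]

def IsCut (c : ℕ) (T : List τ) : Prop :=
  ∃ U V, T = U ++ V ∧ (B.decodeSeq U).length = c

theorem isCut_append (U V : List τ) : B.IsCut (B.decodeSeq U).length (U ++ V) :=
  ⟨U, V, rfl, rfl⟩

variable {B}

theorem not_isCut_junction (hn : B.dec n = B.dec l ++ B.dec r) (hl : B.dec l ≠ [])
    (hr : B.dec r ≠ []) {A : List τ} (hA : A.getLast? = some l) (C : List τ) :
    ¬ B.IsCut (B.decodeSeq A).length (A.dropLast ++ n :: C) := by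
  obtain ⟨A, rfl⟩ := List.getLast?_eq_some_iff.mp hA
  rintro ⟨U, V, hUV, hU⟩
  have hl' := List.length_pos_iff.mpr hl
  have hr' := List.length_pos_iff.mpr hr
  simp only [List.dropLast_concat] at hUV
  rcases List.append_eq_append_iff.mp hUV with ⟨_ | ⟨x, C'⟩, rfl, hC⟩ | ⟨A', rfl, -⟩
  · simp only [decodeSeq_append, decodeSeq_cons, decodeSeq_nil, List.length_append,
      List.append_nil] at hU
    omega
  · obtain ⟨rfl, -⟩ := List.cons_eq_cons.mp hC
    simp only [decodeSeq_append, decodeSeq_cons, decodeSeq_nil, List.length_append,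
      List.append_nil, hn] at hU
    omega
  · simp only [decodeSeq_append, decodeSeq_cons, decodeSeq_nil, List.length_append,
      List.append_nil] at hU
    omega

end Cuts

variable [DecidableEq τ]

def replaceFirst (l r n : τ) : List τ → Option (List τ)
  | [] => none
  | [_] => none
  | t :: u :: rest =>
      if t = l ∧ u = r then some (n :: rest)
      else (replaceFirst l r n (u :: rest)).map (t :: ·)

variable {l r n : τ}

theorem eq_of_replaceFirst_eq_some : ∀ {T T' : List τ}, replaceFirst l r n T = some T' →
    ∃ A C, T = A ++ l :: r :: C ∧ T' = A ++ n :: C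
  | [], _, h | [_], _, h => by simp [replaceFirst] at h
  | t :: u :: rest, T', h => by
    by_cases htu : t = l ∧ u = r
    · simp only [replaceFirst, if_pos htu, Option.some.injEq] at h
      exact ⟨[], rest, by simp [htu], h.symm⟩
    · simp only [replaceFirst, if_neg htu, Option.map_eq_some_iff] at h
      obtain ⟨T₁, h₁, rfl⟩ := h
      obtain ⟨A, C, hT, rfl⟩ := eq_of_replaceFirst_eq_some h₁
      exact ⟨t :: A, C, by simp [hT], rfl⟩

theorem length_lt_of_replaceFirst_eq_some {T T' : List τ}
    (h : replaceFirst l r n T = some T') : T'.length < T.length := by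
  obtain ⟨A, C, rfl, rfl⟩ := eq_of_replaceFirst_eq_some h
  simp

def mergeAll (l r n : τ) (T : List τ) : List τ :=
  match _h : replaceFirst l r n T with
  | none => T
  | some T' => mergeAll l r n T'
termination_by T.length
decreasing_by exact length_lt_of_replaceFirst_eq_some _h

theorem mergeAll_of_replaceFirst_eq_none {T : List τ} (h : replaceFirst l r n T = none) :
    mergeAll l r n T = T := by
  rw [mergeAll]; split <;> simp_all

theorem mergeAll_of_replaceFirst_eq_some {T T' : List τ} (h : replaceFirst l r n T = some T') :
    mergeAll l r n T = mergeAll l r n T' := by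
  rw [mergeAll]; split <;> simp_all

theorem replaceFirst_mergeAll (T : List τ) : replaceFirst l r n (mergeAll l r n T) = none := by
  induction T using mergeAll.induct l r n with
  | case1 T h => rwa [mergeAll_of_replaceFirst_eq_none h]
  | case2 T T' h ih => rwa [mergeAll_of_replaceFirst_eq_some h]

theorem mergeAll_ne_nil {T : List τ} (hT : T ≠ []) : mergeAll l r n T ≠ [] := by
  induction T using mergeAll.induct l r n with
  | case1 T h => rwa [mergeAll_of_replaceFirst_eq_none h]
  | case2 T T' h ih =>
    obtain ⟨A, C, -, rfl⟩ := eq_of_replaceFirst_eq_some h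
    rw [mergeAll_of_replaceFirst_eq_some h]
    exact ih (by simp)

theorem replaceFirst_append_of_eq_some {A A' : List τ} (h : replaceFirst l r n A = some A')
    (C : List τ) : replaceFirst l r n (A ++ C) = some (A' ++ C) := by
  induction A using replaceFirst.induct l r generalizing A' with
  | case1 | case2 => simp [replaceFirst] at h
  | case3 t u rest htu =>
    simp only [replaceFirst, if_pos htu, Option.some.injEq] at h
    simp [replaceFirst, htu, ← h]
  | case4 t u rest htu ih =>
    simp only [replaceFirst, if_neg htu, Option.map_eq_some_iff] at h
    obtain ⟨A₁, h₁, rfl⟩ := h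
    have := ih h₁
    simp only [List.cons_append] at this ⊢
    simp [replaceFirst, htu, this]

theorem replaceFirst_append_of_eq_none {A : List τ} (hA : replaceFirst l r n A = none)
    (C : List τ) : replaceFirst l r n (A ++ C) =
      if A.getLast? = some l ∧ C.head? = some r then some (A.dropLast ++ n :: C.tail)
      else (replaceFirst l r n C).map (A ++ ·) := by
  induction A using replaceFirst.induct l r with
  | case1 => simp
  | case2 a =>
    cases C with
    | nil => simp [replaceFirst]
    | cons c C => simp [replaceFirst]
  | case3 t u rest htu => simp [replaceFirst, htu] at hA
  | case4 t u rest htu ih =>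
    simp only [replaceFirst, if_neg htu, Option.map_eq_none_iff] at hA
    have := ih hA
    simp only [List.cons_append] at this ⊢
    simp only [replaceFirst, if_neg htu, this, List.getLast?_cons_cons, List.dropLast_cons_cons]
    split_ifs <;> simp [Function.comp_def]

theorem mergeAll_append_left (A C : List τ) :
    mergeAll l r n (A ++ C) = mergeAll l r n (mergeAll l r n A ++ C) := by
  induction A using mergeAll.induct l r n with
  | case1 A h => rw [mergeAll_of_replaceFirst_eq_none h]
  | case2 A A' h ih =>
    rw [mergeAll_of_replaceFirst_eq_some (replaceFirst_append_of_eq_some h C),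
      mergeAll_of_replaceFirst_eq_some h, ih]

section MergeAll

variable {B : BPE σ τ}

theorem decodeSeq_replaceFirst (hn : B.dec n = B.dec l ++ B.dec r) {T T' : List τ}
    (h : replaceFirst l r n T = some T') : B.decodeSeq T' = B.decodeSeq T := by
  obtain ⟨A, C, rfl, rfl⟩ := eq_of_replaceFirst_eq_some h
  simp [hn]

theorem decodeSeq_mergeAll (hn : B.dec n = B.dec l ++ B.dec r) (T : List τ) :
    B.decodeSeq (mergeAll l r n T) = B.decodeSeq T := by
  induction T using mergeAll.induct l r n with
  | case1 T h => rw [mergeAll_of_replaceFirst_eq_none h]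
  | case2 T T' h ih =>
    rw [mergeAll_of_replaceFirst_eq_some h, ih, decodeSeq_replaceFirst hn h]

theorem IsCut.of_replaceFirst (hn : B.dec n = B.dec l ++ B.dec r) {c : ℕ} {T T' : List τ}
    (h : replaceFirst l r n T = some T') (hc : B.IsCut c T') : B.IsCut c T := by
  obtain ⟨A, C, rfl, rfl⟩ := eq_of_replaceFirst_eq_some h
  obtain ⟨U, V, hUV, rfl⟩ := hc
  rcases List.append_eq_append_iff.mp hUV with ⟨_ | ⟨x, C'⟩, rfl, hC⟩ | ⟨A', rfl, -⟩
  · exact ⟨A, l :: r :: C, rfl, by simp⟩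
  · obtain ⟨rfl, rfl⟩ := List.cons_eq_cons.mp hC
    exact ⟨A ++ l :: r :: C', V, by simp, by simp [hn]⟩
  · exact ⟨U, A' ++ l :: r :: C, by simp, rfl⟩

theorem IsCut.of_mergeAll (hn : B.dec n = B.dec l ++ B.dec r) {c : ℕ} {T : List τ}
    (hc : B.IsCut c (mergeAll l r n T)) : B.IsCut c T := by
  induction T using mergeAll.induct l r n with
  | case1 T h => rwa [mergeAll_of_replaceFirst_eq_none h] at hc
  | case2 T T' h ih =>
    rw [mergeAll_of_replaceFirst_eq_some h] at hc
    exact (ih hc).of_replaceFirst hn h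

theorem not_isCut_mergeAll_junction (hn : B.dec n = B.dec l ++ B.dec r) (hl : B.dec l ≠ [])
    (hr : B.dec r ≠ []) {A C : List τ} (hA : replaceFirst l r n A = none)
    (hAl : A.getLast? = some l) (hCr : C.head? = some r) :
    ¬ B.IsCut (B.decodeSeq A).length (mergeAll l r n (A ++ C)) := by
  have hAC := replaceFirst_append_of_eq_none hA C
  rw [if_pos ⟨hAl, hCr⟩] at hAC
  rw [mergeAll_of_replaceFirst_eq_some hAC]
  exact fun hc => not_isCut_junction hn hl hr hAl C.tail (hc.of_mergeAll hn)

variable (hn : B.dec n = B.dec l ++ B.dec r) (hl : B.dec l ≠ []) (hr : B.dec r ≠ [])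
include hn hl hr

theorem replaceFirst_append_of_isCut {A A' C : List τ} (hA : replaceFirst l r n A = none)
    (hA' : replaceFirst l r n A' = none) (hlast : A'.getLast? = A.getLast?)
    (hc : B.IsCut (B.decodeSeq A).length (mergeAll l r n (A ++ C))) :
    replaceFirst l r n (A' ++ C) = (replaceFirst l r n C).map (A' ++ ·) := by
  rw [replaceFirst_append_of_eq_none hA' C, hlast,
    if_neg fun hj => not_isCut_mergeAll_junction hn hl hr hA hj.1 hj.2 hc]

/-- Whether the run on `A' ++ C` ever fuses across the junction depends on the stable prefix `A'`
only through its last token. -/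
theorem mergeAll_stable_append_of_isCut {A A' : List τ} (hA : replaceFirst l r n A = none)
    (hA' : replaceFirst l r n A' = none) (hlast : A'.getLast? = A.getLast?) (C : List τ)
    (hc : B.IsCut (B.decodeSeq A).length (mergeAll l r n (A ++ C))) :
    mergeAll l r n (A' ++ C) = A' ++ mergeAll l r n C := by
  have hA'C := replaceFirst_append_of_isCut hn hl hr hA hA' hlast hc
  induction C using mergeAll.induct l r n with
  | case1 C h =>
    rw [h, Option.map_none] at hA'C
    rw [mergeAll_of_replaceFirst_eq_none hA'C, mergeAll_of_replaceFirst_eq_none h]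
  | case2 C C' h ih =>
    have hAC := replaceFirst_append_of_isCut hn hl hr hA hA rfl hc
    rw [h, Option.map_some] at hAC hA'C
    rw [mergeAll_of_replaceFirst_eq_some hAC] at hc
    rw [mergeAll_of_replaceFirst_eq_some hA'C, mergeAll_of_replaceFirst_eq_some h]
    exact ih hc (replaceFirst_append_of_isCut hn hl hr hA hA' hlast hc)

theorem mergeAll_append_of_isCut {A C : List τ}
    (hc : B.IsCut (B.decodeSeq A).length (mergeAll l r n (A ++ C))) :
    mergeAll l r n (A ++ C) = mergeAll l r n A ++ mergeAll l r n C := by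
  rw [mergeAll_append_left, ← decodeSeq_mergeAll hn A] at hc
  rw [mergeAll_append_left]
  exact mergeAll_stable_append_of_isCut hn hl hr (replaceFirst_mergeAll A)
    (replaceFirst_mergeAll A) rfl C hc

theorem mergeAll_append₃ {X Y Z : List τ} (hY : Y ≠ [])
    (hXY : mergeAll l r n (X ++ Y) = mergeAll l r n X ++ mergeAll l r n Y)
    (hYZ : mergeAll l r n (Y ++ Z) = mergeAll l r n Y ++ mergeAll l r n Z) :
    mergeAll l r n (X ++ Y ++ Z) = mergeAll l r n X ++ mergeAll l r n Y ++ mergeAll l r n Z := by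
  have hc : B.IsCut (B.decodeSeq (mergeAll l r n Y)).length
      (mergeAll l r n (mergeAll l r n Y ++ Z)) := by
    rw [← mergeAll_append_left, hYZ]
    exact B.isCut_append _ _
  have hlast : (mergeAll l r n X ++ mergeAll l r n Y).getLast? =
      (mergeAll l r n Y).getLast? := by
    simp [List.getLast?_eq_some_getLast (mergeAll_ne_nil hY)]
  rw [mergeAll_append_left (X ++ Y), hXY]
  exact mergeAll_stable_append_of_isCut hn hl hr (replaceFirst_mergeAll Y)
    (hXY ▸ replaceFirst_mergeAll (X ++ Y)) hlast Z hc

end MergeAll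

def mergeList : List (τ × τ × τ) → List τ → List τ
  | [], T => T
  | m :: ms, T => mergeList ms (mergeAll m.1 m.2.1 m.2.2 T)

theorem mergeList_nil (ms : List (τ × τ × τ)) : mergeList ms [] = [] := by
  induction ms with
  | nil => rfl
  | cons m ms ih => rwa [mergeList, mergeAll_of_replaceFirst_eq_none rfl]

section MergeList

variable {B : BPE σ τ} {ms : List (τ × τ × τ)}
  (hms : ∀ m ∈ ms, B.dec m.2.2 = B.dec m.1 ++ B.dec m.2.1)
include hms

theorem decodeSeq_mergeList (T : List τ) : B.decodeSeq (mergeList ms T) = B.decodeSeq T := by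
  induction ms generalizing T with
  | nil => rfl
  | cons m ms ih =>
    rw [List.forall_mem_cons] at hms
    rw [mergeList, ih hms.2, decodeSeq_mergeAll hms.1]

theorem IsCut.of_mergeList {c : ℕ} {T : List τ} (hc : B.IsCut c (mergeList ms T)) :
    B.IsCut c T := by
  induction ms generalizing T with
  | nil => exact hc
  | cons m ms ih =>
    rw [List.forall_mem_cons] at hms
    exact (ih hms.2 hc).of_mergeAll hms.1

variable (hdec : ∀ u, B.dec u ≠ [])
include hdec

theorem mergeList_append_of_isCut {A C : List τ}
    (hc : B.IsCut (B.decodeSeq A).length (mergeList ms (A ++ C))) :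
    mergeList ms (A ++ C) = mergeList ms A ++ mergeList ms C := by
  induction ms generalizing A C with
  | nil => rfl
  | cons m ms ih =>
    rw [List.forall_mem_cons] at hms
    have hsplit := mergeAll_append_of_isCut hms.1 (hdec _) (hdec _) (hc.of_mergeList hms.2)
    rw [mergeList, hsplit] at hc ⊢
    rw [← decodeSeq_mergeAll hms.1 A] at hc
    exact ih hms.2 hc

theorem mergeAll_append_of_mergeList_append (hn : B.dec n = B.dec l ++ B.dec r)
    {A C : List τ} (h : mergeList ((l, r, n) :: ms) (A ++ C) =
      mergeList ((l, r, n) :: ms) A ++ mergeList ((l, r, n) :: ms) C) :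
    mergeAll l r n (A ++ C) = mergeAll l r n A ++ mergeAll l r n C := by
  have hc : B.IsCut (B.decodeSeq A).length (mergeList ((l, r, n) :: ms) (A ++ C)) := by
    have hms' : ∀ m ∈ (l, r, n) :: ms, B.dec m.2.2 = B.dec m.1 ++ B.dec m.2.1 :=
      List.forall_mem_cons.mpr ⟨hn, hms⟩
    rw [h, ← decodeSeq_mergeList hms' A]
    exact B.isCut_append _ _
  exact mergeAll_append_of_isCut hn (hdec _) (hdec _) (hc.of_mergeList hms)

theorem mergeList_append₃ {X Y Z : List τ} (hY : Y ≠ [])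
    (hXY : mergeList ms (X ++ Y) = mergeList ms X ++ mergeList ms Y)
    (hYZ : mergeList ms (Y ++ Z) = mergeList ms Y ++ mergeList ms Z) :
    mergeList ms (X ++ Y ++ Z) = mergeList ms X ++ mergeList ms Y ++ mergeList ms Z := by
  induction ms generalizing X Y Z with
  | nil => rfl
  | cons m ms ih =>
    obtain ⟨l, r, n⟩ := m
    rw [List.forall_mem_cons] at hms
    have hXY' := mergeAll_append_of_mergeList_append hms.2 hdec hms.1 hXY
    have hYZ' := mergeAll_append_of_mergeList_append hms.2 hdec hms.1 hYZ
    rw [mergeList, mergeAll_append₃ hms.1 (hdec _) (hdec _) hY hXY' hYZ']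
    rw [mergeList, hXY'] at hXY
    rw [mergeList, hYZ'] at hYZ
    exact ih hms.2 (mergeAll_ne_nil hY) hXY hYZ

end MergeList

section Encode

variable (B : BPE σ τ)

theorem replaceLeftmost_map_snd (l r n : τ) (T : List τ) :
    (B.replaceLeftmost l r n T).map Prod.snd = replaceFirst l r n T := by
  induction T using replaceFirst.induct l r with
  | case1 | case2 => rfl
  | case3 t u rest htu => simp [replaceLeftmost, replaceFirst, htu]
  | case4 t u rest htu ih =>
    simp only [replaceLeftmost, replaceFirst, if_neg htu, ← ih, Option.map_map]
    rfl

theorem runMerge_fst (l r n : τ) {fuel : ℕ} {T : List τ} (hT : T.length ≤ fuel) :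
    (B.runMerge l r n fuel T).1 = mergeAll l r n T := by
  induction fuel generalizing T with
  | zero =>
    obtain rfl := List.length_eq_zero_iff.mp (Nat.le_zero.mp hT)
    rw [mergeAll_of_replaceFirst_eq_none rfl]
    rfl
  | succ fuel ih =>
    have h := replaceLeftmost_map_snd B l r n T
    cases h' : B.replaceLeftmost l r n T with
    | none =>
      rw [h', Option.map_none] at h
      simp [runMerge, h', mergeAll_of_replaceFirst_eq_none h.symm]
    | some q =>
      obtain ⟨p, T'⟩ := q
      rw [h', Option.map_some] at h
      have hT' : T'.length ≤ fuel := by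
        have : T'.length < T.length := length_lt_of_replaceFirst_eq_some h.symm
        omega
      simp [runMerge, h', mergeAll_of_replaceFirst_eq_some h.symm, ih hT']

theorem encodeRunAux_fst (L : List (ℕ × τ × τ × τ)) (T : List τ) :
    (B.encodeRunAux L T).1 = mergeList (L.map Prod.snd) T := by
  induction L generalizing T with
  | nil => rfl
  | cons a L ih =>
    obtain ⟨i, l, r, n⟩ := a
    simp [encodeRunAux, mergeList, ih, runMerge_fst B l r n le_rfl]

theorem encode_eq_mergeList (S : List σ) : B.encode S = mergeList B.merges (S.map B.base) := by
  rw [encode, encodeRun, encodeRunAux_fst, List.map_map]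
  congr 1
  exact List.zipIdx_map_fst 0 _

variable {B} (hdec : ∀ u, B.dec u ≠ [])
include hdec

theorem encode_append_of_isCut {S₁ S₂ : List σ}
    (hc : B.IsCut S₁.length (B.encode (S₁ ++ S₂))) :
    B.encode (S₁ ++ S₂) = B.encode S₁ ++ B.encode S₂ := by
  rw [← congrArg List.length (B.decodeSeq_map_base S₁), encode_eq_mergeList,
    List.map_append] at hc
  simp only [encode_eq_mergeList, List.map_append]
  exact mergeList_append_of_isCut B.dec_merge hdec hc

theorem encode_append₃ {S₁ S₂ S₃ : List σ} (hS₂ : S₂ ≠ [])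
    (h₁₂ : B.encode (S₁ ++ S₂) = B.encode S₁ ++ B.encode S₂)
    (h₂₃ : B.encode (S₂ ++ S₃) = B.encode S₂ ++ B.encode S₃) :
    B.encode (S₁ ++ S₂ ++ S₃) = B.encode S₁ ++ B.encode S₂ ++ B.encode S₃ := by
  simp only [encode_eq_mergeList, List.map_append] at h₁₂ h₂₃ ⊢
  exact mergeList_append₃ B.dec_merge hdec (by simpa using hS₂) h₁₂ h₂₃

end Encode

theorem dec_ne_nil_of_encode_dec {B : BPE σ τ} (h : ∀ t, B.encode (B.dec t) = [t]) (t : τ) :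
    B.dec t ≠ [] := by
  intro ht
  simpa [ht, encode_eq_mergeList, mergeList_nil] using h t

end BPE

/-- Let `[t₁, …, tᵢ]` be a valid token sequence with `i ≥ 1` and let
`tᵢ₊₁ ∈ V`. If the pair `[tᵢ, tᵢ₊₁]` is valid, then the sequence
`[t₁, …, tᵢ, tᵢ₊₁]` is valid. -/
theorem BPE.valid_append_of_valid_pair {σ τ : Type*} [DecidableEq τ]
    (B : BPE σ τ) (hNF : B.NormalForm) (T : List τ) (t : τ) (hT : T ≠ [])
    (hvalid : B.Valid T) (hpair : B.Valid [T.getLast hT, t]) :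
    B.Valid (T ++ [t]) := by
  obtain ⟨-, hdecode, -⟩ := hNF
  have hdec := BPE.dec_ne_nil_of_encode_dec hdecode
  obtain ⟨P, u, rfl⟩ : ∃ P u, T = P ++ [u] :=
    ⟨_, _, (List.dropLast_append_getLast hT).symm⟩
  simp only [BPE.Valid, List.getLast_append_singleton, BPE.decodeSeq_append, BPE.decodeSeq_cons,
    BPE.decodeSeq_nil, List.append_nil] at hvalid hpair ⊢
  have h₁₂ : B.encode (B.decodeSeq P ++ B.dec u) =
      B.encode (B.decodeSeq P) ++ B.encode (B.dec u) :=
    BPE.encode_append_of_isCut hdec (hvalid ▸ B.isCut_append P [u])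
  have hP : B.encode (B.decodeSeq P) = P := by
    rw [hvalid, hdecode] at h₁₂
    exact (List.append_cancel_right h₁₂).symm
  have h₂₃ : B.encode (B.dec u ++ B.dec t) = B.encode (B.dec u) ++ B.encode (B.dec t) := by
    rw [hpair, hdecode, hdecode]; rfl
  rw [BPE.encode_append₃ hdec (hdec u) h₁₂ h₂₃, hP, hdecode, hdecode]
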